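/- Define a bijection φ̄ from {I₂, σ_x, σ_z, σ_y} to GF(4) = {0, 1, ω, ω²} by φ̄(I₂)=0, φ̄(σ_x)=1, φ̄(σ_z)=ω, φ̄(σ_y)=ω², extended coordinatewise to n-fold tensor products, and define the symplectic pairing u∗v = Σ_i (v_i u_i² + v_i² u_i) ∈ GF(2) via the trace map tr(x)=x+x². Then two Pauli error operators E₁, E₂ (Kronecker products of Pauli matrices and identities) commute if φ_n(E₁)∗φ_n(E₂)=0 and anticommute if φ_n(E₁)∗φ_n(E₂)≠0. -/

import Mathlib

open Matrix

noncomputable def σx : Matrix (Fin 2) (Fin 2) ℂ := !![0, 1; 1, 0]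
noncomputable def σz : Matrix (Fin 2) (Fin 2) ℂ := !![1, 0; 0, -1]
noncomputable def σy : Matrix (Fin 2) (Fin 2) ℂ := !![0, -Complex.I; Complex.I, 0]

noncomputable def tensorProd (n : ℕ) (τ : Fin n → Matrix (Fin 2) (Fin 2) ℂ) :
    Matrix (Fin n → Fin 2) (Fin n → Fin 2) ℂ :=
  Matrix.of fun x y => ∏ i, τ i (x i) (y i)

/-- GF(4), the field with four elements. -/
abbrev GF4 := GaloisField 2 2

open scoped Classical in
/-- The inverse of the bijection `φ̄`: it sends `0 ↦ I₂`, `1 ↦ σx`, `ω ↦ σz`, `ω² ↦ σy`. -/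
noncomputable def pauliOf (ω : GF4) (a : GF4) : Matrix (Fin 2) (Fin 2) ℂ :=
  if a = 0 then 1 else if a = 1 then σx else if a = ω then σz else σy

/-- The trace-symplectic pairing `u ∗ v = Σ_i (v_i u_i² + v_i² u_i) = Σ_i tr(v_i ū_i)`,
taking values in GF(2) ⊆ GF(4). -/
noncomputable def sympPair {n : ℕ} (u v : Fin n → GF4) : GF4 :=
  ∑ i, (v i * (u i) ^ 2 + (v i) ^ 2 * u i)

/-!
Each Pauli matrix `P(a)` attached to `a ∈ GF(4)` satisfies `P(b) P(a) = (-1)^{tr(b a²)} P(a) P(b)`: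
the trace form `tr(b a²) = a b (a + b)` vanishes exactly when `a = 0`, `b = 0` or `a = b`, which are
exactly the pairs of commuting Pauli matrices, and any two distinct ones among `σx, σy, σz`
anticommute. Tensor products multiply coordinatewise, so the signs multiply, and `(-1)^x` turns the
sum `u ∗ v ∈ GF(2)` of the traces into the product of the signs.
-/

/-- The `i`-th summand `tr(b a²)` of `sympPair`. -/
def traceForm {R : Type*} [CommRing R] (a b : R) : R := b * a ^ 2 + b ^ 2 * a

theorem traceForm_self {R : Type*} [CommRing R] [CharP R 2] (a : R) : traceForm a a = 0 := by
  rw [traceForm, mul_comm, CharTwo.add_self_eq_zero]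

section CharTwo

variable {F : Type*} [Field F]

/-- The character `x ↦ (-1)^x` of `GF(2) = {0, 1} ⊆ F` (junk value `-1` outside `{0, 1}`). -/
noncomputable def gf2Sign (x : F) : ℂ :=
  open scoped Classical in if x = 0 then 1 else -1

@[simp]
theorem gf2Sign_zero : gf2Sign (0 : F) = 1 := by simp [gf2Sign]

@[simp]
theorem gf2Sign_one : gf2Sign (1 : F) = -1 := by simp [gf2Sign]

theorem ne_zero_of_sq_eq_add_one {ω : F} (hω : ω ^ 2 = ω + 1) : ω ≠ 0 := by
  rintro rfl
  simp at hω

variable [CharP F 2]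

theorem ne_one_of_sq_eq_add_one {ω : F} (hω : ω ^ 2 = ω + 1) : ω ≠ 1 := by
  rintro rfl
  simp [CharTwo.add_self_eq_zero] at hω

theorem IsIdempotentElem.add_of_charTwo {x y : F} (hx : IsIdempotentElem x)
    (hy : IsIdempotentElem y) : IsIdempotentElem (x + y) := by
  rw [IsIdempotentElem, ← sq, CharTwo.add_sq, sq, sq, hx.eq, hy.eq]

theorem isIdempotentElem_sum_of_charTwo {ι : Type*} (s : Finset ι) {f : ι → F}
    (hf : ∀ i ∈ s, IsIdempotentElem (f i)) : IsIdempotentElem (∑ i ∈ s, f i) := by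
  classical
  induction s using Finset.induction with
  | empty => simp
  | insert a s ha ih =>
    rw [Finset.sum_insert ha]
    exact (hf a (s.mem_insert_self a)).add_of_charTwo
      (ih fun i hi => hf i (Finset.mem_insert_of_mem hi))

/-- The trace `tr(x) = x + x²` maps `{x | x⁴ = x} = GF(4)` into `GF(2)`. -/
theorem isIdempotentElem_add_sq_of_pow_four {x : F} (hx : x ^ 4 = x) :
    IsIdempotentElem (x + x ^ 2) := by
  rw [IsIdempotentElem, ← sq, CharTwo.add_sq, ← pow_mul, hx, add_comm]

theorem gf2Sign_add {x y : F} (hx : IsIdempotentElem x) (hy : IsIdempotentElem y) :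
    gf2Sign (x + y) = gf2Sign x * gf2Sign y := by
  rcases IsIdempotentElem.iff_eq_zero_or_one.mp hx with rfl | rfl <;>
    rcases IsIdempotentElem.iff_eq_zero_or_one.mp hy with rfl | rfl <;>
    simp [CharTwo.add_self_eq_zero]

theorem gf2Sign_sum {ι : Type*} (s : Finset ι) {f : ι → F}
    (hf : ∀ i ∈ s, IsIdempotentElem (f i)) : gf2Sign (∑ i ∈ s, f i) = ∏ i ∈ s, gf2Sign (f i) := by
  classical
  induction s using Finset.induction with
  | empty => simp
  | insert a s ha ih =>
    have hs : ∀ i ∈ s, IsIdempotentElem (f i) := fun i hi => hf i (Finset.mem_insert_of_mem hi)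
    rw [Finset.sum_insert ha, Finset.prod_insert ha,
      gf2Sign_add (hf a (s.mem_insert_self a)) (isIdempotentElem_sum_of_charTwo s hs), ih hs]

end CharTwo

theorem sympPair_eq_sum_traceForm {n : ℕ} (u v : Fin n → GF4) :
    sympPair u v = ∑ i, traceForm (u i) (v i) := rfl

namespace GF4

theorem pow_four (a : GF4) : a ^ 4 = a := by
  have : Fintype GF4 := Fintype.ofFinite _
  have hcard : Fintype.card GF4 = 4 := by
    rw [← Nat.card_eq_fintype_card, GaloisField.card 2 2 two_ne_zero]
    norm_num
  simpa [hcard] using FiniteField.pow_card a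

theorem isIdempotentElem_traceForm (a b : GF4) : IsIdempotentElem (traceForm a b) := by
  have hsq : (b * a ^ 2) ^ 2 = b ^ 2 * a := by rw [mul_pow, ← pow_mul, pow_four]
  rw [traceForm, ← hsq]
  exact isIdempotentElem_add_sq_of_pow_four (pow_four (b * a ^ 2))

theorem traceForm_eq_one {a b : GF4} (ha : a ≠ 0) (hb : b ≠ 0) (hab : a ≠ b) :
    traceForm a b = 1 := by
  have hne : traceForm a b ≠ 0 := by
    have : traceForm a b = a * b * (a + b) := by unfold traceForm; ring
    rw [this]
    exact mul_ne_zero (mul_ne_zero ha hb) (mt CharTwo.add_eq_zero.mp hab)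
  exact (IsIdempotentElem.iff_eq_zero_or_one.mp (isIdempotentElem_traceForm a b)).resolve_left hne

/-- `ω + 1` is the paper's `ω²`. -/
theorem eq_zero_or_eq_one_or_eq_or_eq_add_one {ω : GF4} (hω : ω ^ 2 = ω + 1) (a : GF4) :
    a = 0 ∨ a = 1 ∨ a = ω ∨ a = ω + 1 := by
  have h2 : (2 : GF4) = 0 := CharTwo.two_eq_zero
  have hfac : a * (a + 1) * ((a + ω) * (a + ω + 1)) = 0 := by
    linear_combination pow_four a + a * (a + 1) * hω + (a ^ 3 + a ^ 2 + a + a * (a + 1) ^ 2 * ω) * h2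
  simp only [mul_eq_zero, CharTwo.add_eq_zero, add_assoc] at hfac
  tauto

end GF4

theorem isIdempotentElem_sympPair {n : ℕ} (u v : Fin n → GF4) : IsIdempotentElem (sympPair u v) :=
  isIdempotentElem_sum_of_charTwo _ fun i _ => GF4.isIdempotentElem_traceForm (u i) (v i)

section Pauli

theorem σx_mul_σz : σx * σz = -(σz * σx) := by
  ext i j; fin_cases i <;> fin_cases j <;> simp [σx, σz, Matrix.mul_apply, Fin.sum_univ_two]

theorem σx_mul_σy : σx * σy = -(σy * σx) := by
  ext i j; fin_cases i <;> fin_cases j <;> simp [σx, σy, Matrix.mul_apply, Fin.sum_univ_two]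

theorem σz_mul_σy : σz * σy = -(σy * σz) := by
  ext i j; fin_cases i <;> fin_cases j <;> simp [σz, σy, Matrix.mul_apply, Fin.sum_univ_two]

variable {ω : GF4}

@[simp]
theorem pauliOf_zero : pauliOf ω 0 = 1 := by simp [pauliOf]

@[simp]
theorem pauliOf_one : pauliOf ω 1 = σx := by simp [pauliOf]

variable (hω : ω ^ 2 = ω + 1)
include hω

theorem pauliOf_self : pauliOf ω ω = σz := by
  simp [pauliOf, ne_zero_of_sq_eq_add_one hω, ne_one_of_sq_eq_add_one hω]

theorem pauliOf_add_one : pauliOf ω (ω + 1) = σy := by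
  simp [pauliOf, CharTwo.add_eq_zero, ne_zero_of_sq_eq_add_one hω, ne_one_of_sq_eq_add_one hω]

theorem pauliOf_mul_pauliOf_anticomm {a b : GF4} (ha : a ≠ 0) (hb : b ≠ 0) (hab : a ≠ b) :
    pauliOf ω b * pauliOf ω a = -(pauliOf ω a * pauliOf ω b) := by
  rcases GF4.eq_zero_or_eq_one_or_eq_or_eq_add_one hω a with rfl | rfl | rfl | rfl <;>
    rcases GF4.eq_zero_or_eq_one_or_eq_or_eq_add_one hω b with rfl | rfl | rfl | rfl <;>
    simp_all [pauliOf_self hω, pauliOf_add_one hω, σx_mul_σz, σx_mul_σy, σz_mul_σy]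

theorem pauliOf_mul_pauliOf_comm (a b : GF4) :
    pauliOf ω b * pauliOf ω a = gf2Sign (traceForm a b) • (pauliOf ω a * pauliOf ω b) := by
  by_cases ha : a = 0
  · simp [ha, traceForm]
  by_cases hb : b = 0
  · simp [hb, traceForm]
  by_cases hab : a = b
  · simp [hab, traceForm_self]
  rw [GF4.traceForm_eq_one ha hb hab, gf2Sign_one, neg_one_smul,
    pauliOf_mul_pauliOf_anticomm hω ha hb hab]

end Pauli

theorem tensorProd_mul (n : ℕ) (τ₁ τ₂ : Fin n → Matrix (Fin 2) (Fin 2) ℂ) :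
    tensorProd n τ₁ * tensorProd n τ₂ = tensorProd n (τ₁ * τ₂) := by
  ext x y
  simp only [tensorProd, Matrix.mul_apply, Matrix.of_apply, Pi.mul_apply, Finset.prod_univ_sum,
    Fintype.piFinset_univ, Finset.prod_mul_distrib]

theorem tensorProd_smul (n : ℕ) (c : Fin n → ℂ) (τ : Fin n → Matrix (Fin 2) (Fin 2) ℂ) :
    tensorProd n (c • τ) = (∏ i, c i) • tensorProd n τ := by
  ext x y
  simp [tensorProd, Finset.prod_mul_distrib]

theorem tensorProd_pauliOf_mul_comm {ω : GF4} (hω : ω ^ 2 = ω + 1) {n : ℕ} (e₁ e₂ : Fin n → GF4) :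
    tensorProd n (fun i => pauliOf ω (e₂ i)) * tensorProd n (fun i => pauliOf ω (e₁ i)) =
      gf2Sign (sympPair e₁ e₂) •
        (tensorProd n (fun i => pauliOf ω (e₁ i)) * tensorProd n (fun i => pauliOf ω (e₂ i))) := by
  rw [sympPair_eq_sum_traceForm,
    gf2Sign_sum _ fun i _ => GF4.isIdempotentElem_traceForm (e₁ i) (e₂ i),
    tensorProd_mul, tensorProd_mul, ← tensorProd_smul]
  exact congrArg (tensorProd n) (funext fun i => pauliOf_mul_pauliOf_comm hω (e₁ i) (e₂ i))

theorem pauli_commutation_via_GF4 (ω : GF4) (hω : ω ^ 2 = ω + 1)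
    (n : ℕ) (e₁ e₂ : Fin n → GF4) :
    (sympPair e₁ e₂ = 0 →
      tensorProd n (fun i => pauliOf ω (e₁ i)) * tensorProd n (fun i => pauliOf ω (e₂ i)) =
      tensorProd n (fun i => pauliOf ω (e₂ i)) * tensorProd n (fun i => pauliOf ω (e₁ i))) ∧
    (sympPair e₁ e₂ ≠ 0 →
      tensorProd n (fun i => pauliOf ω (e₁ i)) * tensorProd n (fun i => pauliOf ω (e₂ i)) =
      -(tensorProd n (fun i => pauliOf ω (e₂ i)) * tensorProd n (fun i => pauliOf ω (e₁ i)))) := by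
  have hswap := tensorProd_pauliOf_mul_comm hω e₁ e₂
  refine ⟨fun h => ?_, fun h => ?_⟩
  · rw [hswap, h, gf2Sign_zero, one_smul]
  · have hone : sympPair e₁ e₂ = 1 :=
      (IsIdempotentElem.iff_eq_zero_or_one.mp (isIdempotentElem_sympPair e₁ e₂)).resolve_left h
    rw [hswap, hone, gf2Sign_one, neg_one_smul, neg_neg]
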